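/- arXiv:1103.4528 — 2 statements merged into one kernel-verified Lean document; each statement's English description precedes it below -/
import Mathlib

section
/- With u_k and d_k = u_{k+1} − u_k as above (0 ≤ u_k ≤ u_{k+1}, ‖d_k‖ ≤ 1, d_j d_k = 0 when |j−k| ≥ 2, d_j d_k self-adjoint commuting), the partial sums r_k = Σ_{l=1}^{k} 2^l d_l satisfy ‖r_k‖ ≤ max_{2≤l≤k} ‖2^{l−1} d_{l−1} + 2^l d_l‖ ≤ 3·2^{k−1} < 2^{k+1}. -/
/-!
Put `a l = 2 ^ l • d l`. Because the `a l` commute and `a i * a j = 0` for `j ≥ i + 2`, an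
inclusion–exclusion identity holds for every `N`:
`r_k ^ N + ∑_{2 ≤ l < k} a l ^ N = ∑_{2 ≤ l ≤ k} (a (l-1) + a l) ^ N`.
With `M = max_l ‖a (l-1) + a l‖`, the identity
`((a (l-1) + a l) ^ N - a l ^ N) * ((a l + a (l+1)) ^ N - a l ^ N) = 0` gives `‖a l ^ N‖ ≤ 3 M ^ N`,
hence `‖r_k ^ N‖ ≤ C M ^ N` with `C` independent of `N`. For self-adjoint elements of a C⋆-ring
`‖x ^ 2 ^ s‖ = ‖x‖ ^ 2 ^ s`, so taking `2 ^ s`-th roots and letting `s → ∞` removes `C`.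
-/

open Finset Filter Topology

section CommRing

variable {R : Type*} [CommRing R]

theorem mul_add_pow_of_mul_eq_zero {x y z : R} (h : x * z = 0) (n : ℕ) :
    x * (y + z) ^ n = x * y ^ n := by
  induction n with
  | zero => simp
  | succ n ih =>
    rw [pow_succ, pow_succ, ← mul_assoc, ← mul_assoc, ih]
    linear_combination y ^ n * h

theorem add_add_pow_add_pow_of_mul_eq_zero {x y z : R} (h : x * z = 0) (n : ℕ) :
    (x + y + z) ^ n + y ^ n = (x + y) ^ n + (y + z) ^ n := by
  -- in the binomial expansion of `(x + w) ^ n`, `z` survives in `w = y + z` only in `w ^ n`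
  have expand : ∀ w, (x + w) ^ n =
      ∑ m ∈ range n, x ^ (m + 1) * w ^ (n - (m + 1)) * n.choose (m + 1) + w ^ n := by
    intro w
    simp [add_pow, sum_range_succ']
  have hterm : ∀ m j, x ^ (m + 1) * (y + z) ^ j = x ^ (m + 1) * y ^ j := by
    intro m j
    rw [pow_succ, mul_assoc, mul_add_pow_of_mul_eq_zero h, ← mul_assoc]
  rw [add_assoc x, expand (y + z), expand y]
  simp_rw [hterm]
  ring

theorem pow_sum_Icc_add_sum_pow {a : ℕ → R} (horth : ∀ i j, i + 2 ≤ j → a i * a j = 0)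
    {k : ℕ} (hk : 2 ≤ k) (N : ℕ) :
    (∑ l ∈ Icc 1 k, a l) ^ N + ∑ l ∈ Icc 2 (k - 1), a l ^ N =
      ∑ l ∈ Icc 2 k, (a (l - 1) + a l) ^ N := by
  induction k, hk using Nat.le_induction with
  | base => simp [sum_Icc_succ_top]
  | succ k hk ih =>
    set r := ∑ l ∈ Icc 1 k, a l
    have hr : (r - a k) * a (k + 1) = 0 := by
      rw [sub_mul, sub_eq_zero, sum_mul]
      refine sum_eq_single_of_mem k (by simp; omega) fun l hl hlk => horth l (k + 1) ?_
      rw [mem_Icc] at hl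
      omega
    have step := add_add_pow_add_pow_of_mul_eq_zero (y := a k) hr N
    rw [sub_add_cancel] at step
    have hpow := sum_Icc_succ_top (show 2 ≤ k - 1 + 1 by omega) fun l => a l ^ N
    rw [Nat.sub_add_cancel (by omega)] at hpow
    rw [sum_Icc_succ_top (by omega), sum_Icc_succ_top (by omega), Nat.add_sub_cancel, hpow, ← ih]
    linear_combination step

theorem sub_pow_mul_sub_pow_eq_zero {x y z : R} (h : x * z = 0) (n : ℕ) :
    ((x + y) ^ n - y ^ n) * ((y + z) ^ n - y ^ n) = 0 := by
  have hx : x ∣ (x + y) ^ n - y ^ n := by simpa using sub_dvd_pow_sub_pow (x + y) y n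
  have hz : z ∣ (y + z) ^ n - y ^ n := by simpa using sub_dvd_pow_sub_pow (y + z) y n
  simpa [h] using mul_dvd_mul hx hz

end CommRing

theorem le_of_forall_pow_two_pow_le_mul_pow {x M C : ℝ} (hM : 0 ≤ M)
    (h : ∀ s : ℕ, x ^ 2 ^ s ≤ C * M ^ 2 ^ s) : x ≤ M := by
  by_contra! hMx
  have hx : 0 < x := hM.trans_lt hMx
  have hlim : Tendsto (fun s : ℕ => C * (M / x) ^ 2 ^ s) atTop (𝓝 (C * 0)) :=
    ((tendsto_pow_atTop_nhds_zero_of_lt_one (by positivity) ((div_lt_one hx).2 hMx)).comp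
      (tendsto_pow_atTop_atTop_of_one_lt one_lt_two)).const_mul C
  have hge : ∀ s : ℕ, 1 ≤ C * (M / x) ^ 2 ^ s := fun s => by
    rw [div_pow, ← mul_div_assoc, le_div_iff₀ (by positivity), one_mul]
    exact h s
  linarith [ge_of_tendsto' hlim hge]

theorem norm_sum_pow_le {ι A : Type*} [SeminormedRing A] (s : Finset ι) {f : ι → A}
    {M : ℝ} {N : ℕ} (hN : 0 < N) (h : ∀ i ∈ s, ‖f i‖ ≤ M) :
    ‖∑ i ∈ s, f i ^ N‖ ≤ #s * M ^ N := by
  refine (norm_sum_le _ _).trans ?_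
  simpa using sum_le_card_nsmul s _ _ fun i hi =>
    (norm_pow_le' _ hN).trans (pow_le_pow_left₀ (norm_nonneg _) (h i hi) N)

section CStarRing

variable {A : Type*} [NormedRing A] [StarRing A] [CStarRing A]

theorem IsSelfAdjoint.norm_le_of_norm_pow_two_pow_le {w : A} (hw : IsSelfAdjoint w) {M C : ℝ}
    (hM : 0 ≤ M) (h : ∀ s : ℕ, ‖w ^ 2 ^ s‖ ≤ C * M ^ 2 ^ s) : ‖w‖ ≤ M :=
  le_of_forall_pow_two_pow_le_mul_pow hM fun s => hw.norm_pow_two_pow s ▸ h s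

theorem IsSelfAdjoint.norm_le_three_mul_of_sub_mul_sub_eq_zero {w P Q : A}
    (hw : IsSelfAdjoint w) (h : (P - w) * (Q - w) = 0) {c : ℝ} (hP : ‖P‖ ≤ c)
    (hQ : ‖Q‖ ≤ c) :
    ‖w‖ ≤ 3 * c := by
  have hww : w * w = P * w + w * Q - P * Q := by
    rw [← add_zero (P * w + w * Q - P * Q), ← h]
    noncomm_ring
  have hc : 0 ≤ c := (norm_nonneg P).trans hP
  have hsq : ‖w‖ * ‖w‖ ≤ 2 * c * ‖w‖ + c * c := calc
    ‖w‖ * ‖w‖ = ‖P * w + w * Q - P * Q‖ := by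
      rw [← hww, ← CStarRing.norm_star_mul_self, hw.star_eq]
    _ ≤ ‖P‖ * ‖w‖ + ‖w‖ * ‖Q‖ + ‖P‖ * ‖Q‖ :=
      (norm_sub_le _ _).trans (add_le_add ((norm_add_le _ _).trans
        (add_le_add (norm_mul_le _ _) (norm_mul_le _ _))) (norm_mul_le _ _))
    _ ≤ 2 * c * ‖w‖ + c * c := by nlinarith [norm_nonneg w, norm_nonneg Q]
  nlinarith [norm_nonneg w]

/-- The hypothesis holds when `x`, `y`, `z` commute and `x * z = 0`
(`sub_pow_mul_sub_pow_eq_zero`). -/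
theorem IsSelfAdjoint.norm_le_max_norm_add {x y z : A} (hy : IsSelfAdjoint y)
    (h : ∀ n : ℕ, ((x + y) ^ n - y ^ n) * ((y + z) ^ n - y ^ n) = 0) :
    ‖y‖ ≤ max ‖x + y‖ ‖y + z‖ := by
  set c := max ‖x + y‖ ‖y + z‖
  refine hy.norm_le_of_norm_pow_two_pow_le (C := 3) (by positivity) fun s => ?_
  have hpow : ∀ u : A, ‖u‖ ≤ c → ‖u ^ 2 ^ s‖ ≤ c ^ 2 ^ s := fun u hu =>
    (norm_pow_le' u (by positivity)).trans (pow_le_pow_left₀ (norm_nonneg u) hu _)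
  exact (hy.pow _).norm_le_three_mul_of_sub_mul_sub_eq_zero (h _)
    (hpow _ (le_max_left _ _)) (hpow _ (le_max_right _ _))

end CStarRing

open scoped IsMulCommutative in
theorem norm_sum_Icc_le_sup'_norm_add {A : Type*} [NormedRing A] [StarRing A] [CStarRing A]
    {a : ℕ → A} (hsa : ∀ l, IsSelfAdjoint (a l)) (hcomm : ∀ i j, Commute (a i) (a j))
    (horth : ∀ i j, i + 2 ≤ j → a i * a j = 0) {k : ℕ} (hk : 2 ≤ k) :
    ‖∑ l ∈ Icc 1 k, a l‖ ≤
      (Icc 2 k).sup' (nonempty_Icc.mpr hk) fun l => ‖a (l - 1) + a l‖ := by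
  set M := (Icc 2 k).sup' (nonempty_Icc.mpr hk) fun l => ‖a (l - 1) + a l‖
  have hM : ∀ l ∈ Icc 2 k, ‖a (l - 1) + a l‖ ≤ M := fun l hl =>
    le_sup' (fun l => ‖a (l - 1) + a l‖) hl
  have hM0 : 0 ≤ M := (norm_nonneg _).trans (hM 2 (by simp [hk]))
  -- the algebraic identities are proved in the commutative subring generated by the `a l`
  have := Subring.isMulCommutative_closure (s := Set.range a) <| by
    rintro _ ⟨i, rfl⟩ _ ⟨j, rfl⟩
    exact hcomm i j
  let b : ℕ → Subring.closure (Set.range a) := fun l =>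
    ⟨a l, Subring.subset_closure ⟨l, rfl⟩⟩
  have hb : ∀ i j, i + 2 ≤ j → b i * b j = 0 := fun i j hij => Subtype.ext (horth i j hij)
  have hsum : ∀ N, (∑ l ∈ Icc 1 k, a l) ^ N = ∑ l ∈ Icc 2 k, (a (l - 1) + a l) ^ N
      - ∑ l ∈ Icc 2 (k - 1), a l ^ N := fun N => by
    rw [eq_sub_iff_add_eq]
    simpa [b] using congrArg Subtype.val (pow_sum_Icc_add_sum_pow hb hk N)
  have hmid : ∀ l ∈ Icc 2 (k - 1), ‖a l‖ ≤ M := by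
    intro l hl
    rw [mem_Icc] at hl
    have hcore (n : ℕ) :
        ((a (l - 1) + a l) ^ n - a l ^ n) * ((a l + a (l + 1)) ^ n - a l ^ n) = 0 := by
      simpa [b] using congrArg Subtype.val
        (sub_pow_mul_sub_pow_eq_zero (y := b l) (hb (l - 1) (l + 1) (by omega)) n)
    refine ((hsa l).norm_le_max_norm_add hcore).trans (max_le ?_ ?_)
    · exact hM l (mem_Icc.2 ⟨hl.1, by omega⟩)
    · simpa using hM (l + 1) (mem_Icc.2 ⟨by omega, by omega⟩)
  refine (isSelfAdjoint_sum _ fun l _ => hsa l).norm_le_of_norm_pow_two_pow_le hM0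
    (C := #(Icc 2 k) + #(Icc 2 (k - 1))) fun s => ?_
  rw [hsum, add_mul]
  exact (norm_sub_le _ _).trans (add_le_add (norm_sum_pow_le _ (by positivity) hM)
    (norm_sum_pow_le _ (by positivity) hmid))

/-- for positive contractions `d_l` with `d_j d_k = 0` when `|j−k| ≥ 2`, the
partial sums `r_k = Σ_{l=1}^k 2^l d_l` satisfy
`‖r_k‖ ≤ max_{2≤l≤k} ‖2^{l−1} d_{l−1} + 2^l d_l‖ ≤ 3·2^{k−1} < 2^{k+1}`. -/
theorem stmt_4 {A : Type*} [NormedRing A] [StarRing A] [CStarRing A]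
    [PartialOrder A] [StarOrderedRing A] (d : ℕ → A)
    (hpos : ∀ l, 0 ≤ d l)
    (hcontr : ∀ l, ‖d l‖ ≤ 1)
    (horth : ∀ j k, j + 2 ≤ k → d j * d k = 0 ∧ d k * d j = 0)
    (hcomm : ∀ j k, Commute (d j) (d k))
    (k : ℕ) (hk : 2 ≤ k) :
    ‖∑ l ∈ Finset.Icc 1 k, (2 ^ l : ℕ) • d l‖ ≤
        (Finset.Icc 2 k).sup' (Finset.nonempty_Icc.mpr hk)
          (fun l => ‖(2 ^ (l - 1) : ℕ) • d (l - 1) + (2 ^ l : ℕ) • d l‖) ∧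
      (Finset.Icc 2 k).sup' (Finset.nonempty_Icc.mpr hk)
          (fun l => ‖(2 ^ (l - 1) : ℕ) • d (l - 1) + (2 ^ l : ℕ) • d l‖) ≤
        3 * 2 ^ (k - 1) ∧
      (3 * 2 ^ (k - 1) : ℝ) < 2 ^ (k + 1) := by
  set a : ℕ → A := fun l => (2 ^ l : ℕ) • d l
  have hnorm : ∀ l, ‖a l‖ ≤ 2 ^ l := fun l => norm_nsmul_le.trans <| by
    push_cast
    exact mul_le_of_le_one_right (by positivity) (hcontr l)
  refine ⟨norm_sum_Icc_le_sup'_norm_add (fun l => .of_nonneg (nsmul_nonneg (hpos l) _))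
    (fun i j => ((hcomm i j).smul_left _).smul_right _)
    (fun i j hij => by simp only [smul_mul_smul_comm, (horth i j hij).1, smul_zero]) hk,
    sup'_le _ _ fun l hl => ?_, ?_⟩
  · rw [mem_Icc] at hl
    obtain ⟨j, rfl⟩ : ∃ j, l = j + 1 := ⟨l - 1, by omega⟩
    calc ‖a (j + 1 - 1) + a (j + 1)‖ ≤ 2 ^ j + 2 ^ (j + 1) :=
          (norm_add_le _ _).trans (add_le_add (hnorm _) (hnorm _))
      _ = 3 * 2 ^ j := by ring
      _ ≤ 3 * 2 ^ (k - 1) := by gcongr; exacts [one_le_two, by omega]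
  · obtain ⟨j, rfl⟩ : ∃ j, k = j + 1 := ⟨k - 1, by omega⟩
    simp only [Nat.add_sub_cancel, pow_succ]
    linarith [pow_pos (two_pos : (0 : ℝ) < 2) j]
end

section
/- For bounded operators D, a with ‖a‖_{n−1,D} := ‖Θ^{n−1}_D(a)‖ < 1, one has limsup_{m→∞} (ln‖a^m‖_{n,D})/m ≤ 0, where ‖a^m‖_{n,D} = ‖Θⁿ_D(a^m)‖. Precisely, using ‖Θⁿ_D(a^m)‖ ≤ ‖Θ^{n−1}_D(a^m)‖ + ‖ad_D(Θ^{n−1}_D(a^m))‖ and the Leibniz rule ad_D(x^m) = Σ_{j=0}^{m−1} x^j ad_D(x) x^{m−1−j}, giving ‖ad_D(Θ^{n−1}_D(a^m))‖ ≤ m‖Θ^{n−1}_D(a)‖^{m−1}‖ad_D(Θ^{n−1}_D(a))‖, the limsup is ≤ 0. -/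
/-!
`Θⁿ⁺¹_D(b)` is the block matrix `[[Θⁿ_D(b), 0], [ad_D(Θⁿ_D(b)), Θⁿ_D(b)]]` and `Θⁿ_D` is
multiplicative, so with `T = Θⁿ_D(a)` every entry of `Θⁿ⁺¹_D(a^m)` is an entry of `T^m` or of
`ad_D(T^m) = Σⱼ Tʲ ad_D(T) T^(m-1-j)`, hence has norm at most `‖T‖^m + m ‖T‖^(m-1) ‖ad_D(T)‖`.
Bounding the operator norm of a `k × k` operator matrix by `k²` times the largest entry norm,
`‖Θⁿ⁺¹_D(a^m)‖` grows at most linearly in `m` when `‖T‖ < 1`, and `log(C m)/m → 0`.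
-/

/-- The iterated commutator `ad_D^n(a)`. -/
def adIter {R : Type*} [Ring R] (D : R) : ℕ → R → R
  | 0, a => a
  | n + 1, a => D * adIter D n a - adIter D n a * D

/-- The recursively defined `2ⁿ×2ⁿ` operator matrix
`Θⁿ_D(a) = [[Θ^{n−1}_D(a), 0], [ad_D(Θ^{n−1}_D(a)), Θ^{n−1}_D(a)]]`,
where `D` acts diagonally (so the commutator is taken entrywise). -/
def Theta {R : Type*} [Ring R] (D : R) : (n : ℕ) → R → Matrix (Fin (2 ^ n)) (Fin (2 ^ n)) R
  | 0, a => Matrix.of fun _ _ => a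
  | n + 1, a =>
    Matrix.reindex
      (finSumFinEquiv.trans (finCongr (by rw [pow_succ]; ring)))
      (finSumFinEquiv.trans (finCongr (by rw [pow_succ]; ring)))
      (Matrix.fromBlocks (Theta D n a) 0
        (Matrix.of fun i j => D * Theta D n a i j - Theta D n a i j * D)
        (Theta D n a))

variable {H : Type*} [NormedAddCommGroup H] [InnerProductSpace ℂ H]

/-- `Pi.single` as a continuous linear map. -/
noncomputable def singCLM (m : ℕ) (i : Fin m) [DecidableEq (Fin m)] :
    H →L[ℂ] (Fin m → H) where
  toLinearMap := LinearMap.single ℂ (fun _ : Fin m => H) i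
  cont := continuous_single (A := fun _ : Fin m => H) i

/-- An `m × m` matrix of bounded operators on `H`, acting as a bounded operator on the
Hilbert space `H^{⊕m}` (i.e. `PiLp 2 (fun _ : Fin m => H)`), so that `‖matCLM M‖` is the
operator norm of the operator matrix `M`. -/
noncomputable def matCLM {m : ℕ} (M : Matrix (Fin m) (Fin m) (H →L[ℂ] H)) :
    PiLp 2 (fun _ : Fin m => H) →L[ℂ] PiLp 2 (fun _ : Fin m => H) :=
  ∑ i : Fin m, ∑ j : Fin m,
    ((PiLp.continuousLinearEquiv 2 ℂ (fun _ : Fin m => H)).symm :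
        (Fin m → H) →L[ℂ] PiLp 2 (fun _ : Fin m => H)).comp
      (((singCLM m i).comp ((M i j).comp (ContinuousLinearMap.proj j))).comp
        ((PiLp.continuousLinearEquiv 2 ℂ (fun _ : Fin m => H)) :
          PiLp 2 (fun _ : Fin m => H) →L[ℂ] (Fin m → H)))

open Filter
open Topology

theorem norm_mul_pow_succ_sub_pow_succ_mul_le {A : Type*} [SeminormedRing A] (x y : A) (m : ℕ) :
    ‖x * y ^ (m + 1) - y ^ (m + 1) * x‖ ≤ (m + 1) * ‖y‖ ^ m * ‖x * y - y * x‖ := by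
  induction m with
  | zero => simp
  | succ m ih =>
    have hleibniz : x * y ^ (m + 1 + 1) - y ^ (m + 1 + 1) * x =
        (x * y ^ (m + 1) - y ^ (m + 1) * x) * y + y ^ (m + 1) * (x * y - y * x) := by
      rw [pow_succ y (m + 1)]
      noncomm_ring
    calc ‖x * y ^ (m + 1 + 1) - y ^ (m + 1 + 1) * x‖
        ≤ ‖x * y ^ (m + 1) - y ^ (m + 1) * x‖ * ‖y‖ + ‖y‖ ^ (m + 1) * ‖x * y - y * x‖ := by
          rw [hleibniz]
          refine (norm_add_le _ _).trans (add_le_add (norm_mul_le _ _) ?_)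
          exact (norm_mul_le _ _).trans (by gcongr; exact norm_pow_le' y m.succ_pos)
      _ ≤ (m + 1) * ‖y‖ ^ m * ‖x * y - y * x‖ * ‖y‖ + ‖y‖ ^ (m + 1) * ‖x * y - y * x‖ := by
          gcongr
      _ = ((m + 1 : ℕ) + 1) * ‖y‖ ^ (m + 1) * ‖x * y - y * x‖ := by
          push_cast
          ring

def adDiag {R ι : Type*} [Ring R] [Fintype ι] [DecidableEq ι] (D : R) (M : Matrix ι ι R) :
    Matrix ι ι R :=
  Matrix.diagonal (fun _ => D) * M - M * Matrix.diagonal (fun _ => D)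

theorem of_mul_sub_mul_eq_adDiag {R ι : Type*} [Ring R] [Fintype ι] [DecidableEq ι] (D : R)
    (M : Matrix ι ι R) : Matrix.of (fun i j => D * M i j - M i j * D) = adDiag D M := by
  ext i j
  simp [adDiag, Matrix.diagonal_mul, Matrix.mul_diagonal]

def finSumFinPowTwoEquiv (n : ℕ) : Fin (2 ^ n) ⊕ Fin (2 ^ n) ≃ Fin (2 ^ (n + 1)) :=
  finSumFinEquiv.trans (finCongr (by rw [pow_succ]; ring))

theorem Theta_succ {R : Type*} [Ring R] (D : R) (n : ℕ) (a : R) :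
    Theta D (n + 1) a =
      Matrix.reindexRingEquiv R (finSumFinPowTwoEquiv n)
        (Matrix.fromBlocks (Theta D n a) 0 (adDiag D (Theta D n a)) (Theta D n a)) := by
  rw [← of_mul_sub_mul_eq_adDiag]
  rfl

theorem Theta_one {R : Type*} [Ring R] (D : R) (n : ℕ) : Theta D n 1 = 1 := by
  induction n with
  | zero =>
    ext i j
    simp [Theta, Matrix.one_apply, Subsingleton.elim (α := Fin 1) i j]
  | succ n ih => simp [Theta_succ, ih, adDiag, Matrix.fromBlocks_one]

theorem Theta_mul {R : Type*} [Ring R] (D : R) (n : ℕ) (x y : R) :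
    Theta D n (x * y) = Theta D n x * Theta D n y := by
  induction n with
  | zero =>
    ext i j
    simp [Theta, Matrix.mul_apply]
  | succ n ih =>
    rw [Theta_succ, Theta_succ, Theta_succ, ← map_mul, Matrix.fromBlocks_multiply, ih]
    congr 1
    simp only [mul_zero, zero_mul, add_zero, zero_add, adDiag]
    congr 1
    noncomm_ring

def thetaMonoidHom {R : Type*} [Ring R] (D : R) (n : ℕ) :
    R →* Matrix (Fin (2 ^ n)) (Fin (2 ^ n)) R where
  toFun := Theta D n
  map_one' := Theta_one D n
  map_mul' := Theta_mul D n

section matCLM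

variable {m : ℕ}

@[simp]
theorem singCLM_apply [DecidableEq (Fin m)] (i : Fin m) (x : H) :
    singCLM m i x = Pi.single i x := rfl

theorem matCLM_apply (M : Matrix (Fin m) (Fin m) (H →L[ℂ] H)) (v : PiLp 2 (fun _ : Fin m => H))
    (k : Fin m) : matCLM M v k = ∑ j, M k j (v j) := by
  simp [matCLM, Pi.single_apply]

theorem matCLM_mul (M N : Matrix (Fin m) (Fin m) (H →L[ℂ] H)) :
    matCLM (M * N) = matCLM M * matCLM N := by
  ext v k
  simp only [matCLM_apply, mul_apply_eq_comp, Matrix.mul_apply, sum_apply, map_sum]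
  exact Finset.sum_comm

theorem matCLM_one : matCLM (1 : Matrix (Fin m) (Fin m) (H →L[ℂ] H)) = 1 := by
  ext v k
  rw [matCLM_apply, Fintype.sum_eq_single k fun j hj => by simp [Matrix.one_apply_ne' hj]]
  simp

theorem matCLM_add (M N : Matrix (Fin m) (Fin m) (H →L[ℂ] H)) :
    matCLM (M + N) = matCLM M + matCLM N := by
  ext v k
  simp [matCLM_apply, Finset.sum_add_distrib]

theorem matCLM_zero : matCLM (0 : Matrix (Fin m) (Fin m) (H →L[ℂ] H)) = 0 := by
  ext v k
  simp [matCLM_apply]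

noncomputable def matCLMRingHom (m : ℕ) :
    Matrix (Fin m) (Fin m) (H →L[ℂ] H) →+*
      (PiLp 2 (fun _ : Fin m => H) →L[ℂ] PiLp 2 (fun _ : Fin m => H)) where
  toFun := matCLM
  map_one' := matCLM_one
  map_mul' := matCLM_mul
  map_zero' := matCLM_zero
  map_add' := matCLM_add

theorem norm_apply_le_norm_matCLM (M : Matrix (Fin m) (Fin m) (H →L[ℂ] H)) (i j : Fin m) :
    ‖M i j‖ ≤ ‖matCLM M‖ := by
  refine ContinuousLinearMap.opNorm_le_bound _ (norm_nonneg (matCLM M)) fun x => ?_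
  calc ‖M i j x‖ = ‖matCLM M (PiLp.single 2 j x) i‖ := by
        rw [matCLM_apply, Fintype.sum_eq_single j fun k hk => by
          rw [PiLp.single_eq_of_ne (p := 2) hk, map_zero], PiLp.single_eq_same]
    _ ≤ ‖matCLM M (PiLp.single 2 j x)‖ := PiLp.norm_apply_le _ _
    _ ≤ ‖matCLM M‖ * ‖x‖ := by
        rw [← PiLp.norm_single 2 (fun _ : Fin m => H) j x]
        exact (matCLM M).le_opNorm _

theorem norm_matCLM_le_sum (M : Matrix (Fin m) (Fin m) (H →L[ℂ] H)) :
    ‖matCLM M‖ ≤ ∑ i, ∑ j, ‖M i j‖ := by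
  refine ContinuousLinearMap.opNorm_le_bound _ (by positivity) fun v => ?_
  have hv : matCLM M v = ∑ i, ∑ j, PiLp.single 2 i (M i j (v j)) := by
    ext k
    simp [matCLM_apply, Pi.single_apply]
  calc ‖matCLM M v‖ ≤ ∑ i, ∑ j, ‖M i j (v j)‖ := by
        rw [hv]
        refine (norm_sum_le _ _).trans (Finset.sum_le_sum fun i _ => ?_)
        exact (norm_sum_le _ _).trans_eq (by simp only [PiLp.norm_single])
    _ ≤ ∑ i, ∑ j, ‖M i j‖ * ‖v‖ := by
        gcongr with i _ j _
        exact (M i j).le_opNorm_of_le (PiLp.norm_apply_le v j)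
    _ = (∑ i, ∑ j, ‖M i j‖) * ‖v‖ := by simp only [Finset.sum_mul]

end matCLM

theorem norm_matCLM_reindex_fromBlocks_le {k m : ℕ} (e : Fin k ⊕ Fin k ≃ Fin m)
    (T C : Matrix (Fin k) (Fin k) (H →L[ℂ] H)) :
    ‖matCLM (Matrix.reindex e e (Matrix.fromBlocks T 0 C T))‖ ≤
      (m : ℝ) ^ 2 * (‖matCLM T‖ + ‖matCLM C‖) := by
  have hT := norm_apply_le_norm_matCLM T
  have hC := norm_apply_le_norm_matCLM C
  have hT0 := ContinuousLinearMap.opNorm_nonneg (matCLM T)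
  have hC0 := ContinuousLinearMap.opNorm_nonneg (matCLM C)
  have hentry : ∀ i j, ‖Matrix.fromBlocks T 0 C T i j‖ ≤ ‖matCLM T‖ + ‖matCLM C‖ := by
    rintro (i | i) (j | j)
    · simpa using (hT i j).trans (le_add_of_nonneg_right hC0)
    · simpa using add_nonneg hT0 hC0
    · simpa using (hC i j).trans (le_add_of_nonneg_left hT0)
    · simpa using (hT i j).trans (le_add_of_nonneg_right hC0)
  calc ‖matCLM (Matrix.reindex e e (Matrix.fromBlocks T 0 C T))‖
      ≤ ∑ _i : Fin m, ∑ _j : Fin m, (‖matCLM T‖ + ‖matCLM C‖) :=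
        (norm_matCLM_le_sum _).trans (by gcongr with i _ j _; exact hentry _ _)
    _ = (m : ℝ) ^ 2 * (‖matCLM T‖ + ‖matCLM C‖) := by
        simp only [Finset.sum_const, Finset.card_univ, Fintype.card_fin, nsmul_eq_mul]
        ring

theorem norm_matCLM_Theta_succ_pow_succ_le (D a : H →L[ℂ] H) (n m : ℕ) :
    ‖matCLM (Theta D (n + 1) (a ^ (m + 1)))‖ ≤ ((2 ^ (n + 1) : ℕ) : ℝ) ^ 2 *
      (‖matCLM (Theta D n a)‖ ^ (m + 1) +
        (m + 1) * ‖matCLM (Theta D n a)‖ ^ m * ‖matCLM (adDiag D (Theta D n a))‖) := by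
  have hpow : Theta D n (a ^ (m + 1)) = Theta D n a ^ (m + 1) := map_pow (thetaMonoidHom D n) a _
  rw [Theta_succ, Matrix.coe_reindexRingEquiv, hpow]
  refine (norm_matCLM_reindex_fromBlocks_le _ _ _).trans
    (mul_le_mul_of_nonneg_left ?_ (by positivity))
  have hφ : ∀ M, matCLM M = matCLMRingHom (H := H) (2 ^ n) M := fun _ => rfl
  simp only [adDiag, hφ, map_pow, map_sub, map_mul]
  generalize matCLMRingHom (2 ^ n) (Matrix.diagonal fun _ => D) = x
  generalize matCLMRingHom (2 ^ n) (Theta D n a) = y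
  exact add_le_add (norm_pow_le' y m.succ_pos) (norm_mul_pow_succ_sub_pow_succ_mul_le x y m)

theorem limsup_le_zero_of_eventually_le_of_tendsto {ι : Type*} {f : Filter ι} {u v : ι → ℝ}
    (huv : ∀ᶠ i in f, u i ≤ v i) (hv : Tendsto v f (𝓝 0)) : limsup u f ≤ 0 := by
  by_cases hc : IsCoboundedUnder (· ≤ ·) f u
  · refine le_of_forall_pos_le_add fun ε hε => ?_
    rw [zero_add]
    refine limsup_le_of_le hc ?_
    filter_upwards [huv, hv.eventually (gt_mem_nhds hε)] with i hi hvi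
    exact hi.trans hvi.le
  · -- the junk value: `limsup` is then the `sInf` of a set not bounded below, which is `0`
    rw [limsup_eq, Real.sInf_of_not_bddBelow]
    exact fun ⟨b, hb⟩ => hc ⟨b, fun a ha => hb ha⟩

theorem limsup_log_div_le_zero_of_le_mul {u : ℕ → ℝ} {C : ℝ} (h0 : ∀ m, 0 ≤ u m)
    (h : ∀ m, 0 < m → u m ≤ C * m) : limsup (fun m => Real.log (u m) / m) atTop ≤ 0 := by
  set K := max C 1
  have hK : 0 < K := lt_of_lt_of_le one_pos (le_max_right _ _)
  refine limsup_le_zero_of_eventually_le_of_tendsto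
    (v := fun m : ℕ => Real.log (K * m) / m) ?_ ?_
  · filter_upwards [eventually_gt_atTop 0] with m hm
    have hm1 : (1 : ℝ) ≤ m := by exact_mod_cast hm
    refine div_le_div_of_nonneg_right ?_ (Nat.cast_nonneg m)
    rcases (h0 m).eq_or_lt with hu | hu
    · rw [← hu, Real.log_zero]
      exact Real.log_nonneg (one_le_mul_of_one_le_of_one_le (le_max_right _ _) hm1)
    · exact Real.log_le_log hu ((h m hm).trans (by gcongr; exact le_max_left _ _))
  · have hlog : Tendsto (fun m : ℕ => Real.log m / m) atTop (𝓝 0) := by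
      simpa [Function.comp_def] using
        (Real.tendsto_pow_log_div_mul_add_atTop 1 0 1 one_ne_zero).comp tendsto_natCast_atTop_atTop
    have hsum := (tendsto_const_div_atTop_nhds_zero_nat (Real.log K)).add hlog
    rw [add_zero] at hsum
    refine hsum.congr' ?_
    filter_upwards [eventually_gt_atTop 0] with m hm
    rw [Real.log_mul hK.ne' (by positivity), add_div]

/-- if `‖a‖_{n,D} := ‖Θⁿ_D(a)‖ < 1` then
`limsup_{m→∞} (ln ‖a^m‖_{n+1,D})/m ≤ 0`, i.e. the norm `‖·‖_{n+1,D}` is analytic with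
respect to `‖·‖_{n,D}`. -/
theorem stmt_12 (D a : H →L[ℂ] H) (n : ℕ)
    (h : ‖matCLM (Theta D n a)‖ < 1) :
    Filter.limsup
      (fun m : ℕ => Real.log ‖matCLM (Theta D (n + 1) (a ^ m))‖ / m) atTop ≤ 0 := by
  set N : ℝ := ((2 ^ (n + 1) : ℕ) : ℝ) ^ 2
  set c := ‖matCLM (adDiag D (Theta D n a))‖
  refine limsup_log_div_le_zero_of_le_mul (C := N * (1 + c))
    (fun _ => ContinuousLinearMap.opNorm_nonneg _) fun m hm => ?_
  obtain ⟨k, rfl⟩ := Nat.exists_eq_add_one_of_ne_zero hm.ne'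
  have hT0 := ContinuousLinearMap.opNorm_nonneg (matCLM (Theta D n a))
  calc ‖matCLM (Theta D (n + 1) (a ^ (k + 1)))‖
      ≤ N * (‖matCLM (Theta D n a)‖ ^ (k + 1) + (k + 1) * ‖matCLM (Theta D n a)‖ ^ k * c) :=
        norm_matCLM_Theta_succ_pow_succ_le D a n k
    _ ≤ N * (1 + (k + 1) * 1 * c) := by
        gcongr
        · exact pow_le_one₀ hT0 h.le
        · exact pow_le_one₀ hT0 h.le
    _ ≤ N * (1 + c) * ((k + 1 : ℕ) : ℝ) := by
        push_cast
        linarith [mul_nonneg (by positivity : 0 ≤ N) (Nat.cast_nonneg (α := ℝ) k)]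
end
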